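/- Let V and W be bounded connected open subsets of a finite-dimensional complex vector space E, both containing 0. If Φ : V → W is a biholomorphism and Ψ : V → W is a holomorphic map with Ψ(0) = Φ(0) and D_0Ψ = D_0Φ, then Ψ = Φ. -/

import Mathlib

/-!
Replacing `Ψ` by `g ∘ Ψ`, with `g = Φ⁻¹`, reduces the theorem to Cartan's: a holomorphic self-map
`F` of a bounded domain with `F x = x` and `D F x = id` is the identity. If
`F = id + P_k + O(|y - x|^(k+1))` with `P_k` homogeneous of degree `k ≥ 2`, then
`F^[n] = id + n P_k + O(|y - x|^(k+1))`. All iterates map `V` into the bounded set `V`, so Cauchy's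
estimates bound `n P_k` uniformly in `n`, which forces `P_k = 0`. Hence `F = id` near `x`, and on
all of `V` by the identity theorem.
-/

open Set Filter Topology FormalMultilinearSeries

namespace FormalMultilinearSeries

variable {𝕜 E : Type*} [NontriviallyNormedField 𝕜] [NormedAddCommGroup E] [NormedSpace 𝕜 E]

/-- `p` agrees with the identity series in degrees `1, …, k - 1`; the constant coefficient is
left free. -/
structure IsIdModDegree (p : FormalMultilinearSeries 𝕜 E E) (k : ℕ) : Prop where
  one_eq : p 1 = id 𝕜 E 0 1
  eq_zero : ∀ j, 2 ≤ j → j < k → p j = 0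

variable {p q : FormalMultilinearSeries 𝕜 E E} {k : ℕ}

/-- Only the two compositions `ones m` and `single m` survive: any other one has a block of
size strictly between `1` and `m`. -/
theorem comp_eq_add_of_isIdModDegree (hp : p.IsIdModDegree k) (hq : q.IsIdModDegree k) {m : ℕ}
    (hm2 : 2 ≤ m) (hmk : m ≤ k) : (p.comp q) m = p m + q m := by
  have hm0 : 0 < m := by omega
  ext v
  change (∑ c : Composition m, p.compAlongComposition q c) v = _
  rw [sum_apply, Finset.sum_eq_add_of_mem (Composition.ones m)
    (Composition.single m hm0) (Finset.mem_univ _) (Finset.mem_univ _) ?ones_ne_single ?others]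
  case ones_ne_single =>
    intro h
    have := congrArg Composition.length h
    rw [Composition.ones_length, Composition.single_length] at this
    omega
  case others =>
    rintro c - ⟨hc_ones, hc_single⟩
    obtain ⟨i, hi, hi1⟩ := Composition.ne_ones_iff.1 hc_ones
    rw [← Composition.ofFn_blocksFun, List.mem_ofFn] at hi
    obtain ⟨j, rfl⟩ := hi
    have hlt : c.blocksFun j < m := (Composition.ne_single_iff hm0).1 hc_single j
    rw [compAlongComposition_apply]
    apply ContinuousMultilinearMap.map_coord_zero _ j
    simp [applyComposition, hq.eq_zero _ hi1 (hlt.trans_le hmk)]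
  have h_ones : p.compAlongComposition q (Composition.ones m) v = p m v := by
    rw [compAlongComposition_apply, applyComposition_ones]
    refine p.congr (Composition.ones_length m) fun i _ _ => ?_
    simp only [hq.one_eq, id_apply_one]
    rfl
  have h_single : p.compAlongComposition q (Composition.single m hm0) v = q m v := by
    rw [compAlongComposition_apply, applyComposition_single,
      p.congr (Composition.single_length hm0) (fun _ _ _ => rfl), hp.one_eq]
    rfl
  rw [h_ones, h_single]
  rfl

theorem IsIdModDegree.comp (hp : p.IsIdModDegree k) (hq : q.IsIdModDegree k) :
    (p.comp q).IsIdModDegree k where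
  one_eq := by
    ext v
    rw [comp_coeff_one, hq.one_eq, id_apply_one, hp.one_eq, id_apply_one]
  eq_zero j hj2 hjk := by
    rw [comp_eq_add_of_isIdModDegree hp hq hj2 hjk.le, hp.eq_zero j hj2 hjk,
      hq.eq_zero j hj2 hjk, add_zero]

end FormalMultilinearSeries

section Analytic

variable {𝕜 E F : Type*} [NontriviallyNormedField 𝕜] [NormedAddCommGroup E] [NormedSpace 𝕜 E]
  [NormedAddCommGroup F] [NormedSpace 𝕜 F] {f : E → F} {p q : FormalMultilinearSeries 𝕜 E F}
  {x : E}

theorem HasFPowerSeriesAt.apply_diag_eq (hp : HasFPowerSeriesAt f p x)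
    (hq : HasFPowerSeriesAt f q x) (n : ℕ) (y : E) :
    (p n fun _ => y) = q n fun _ => y := by
  have h := hp.sub hq
  rw [sub_self] at h
  simpa [sub_eq_zero] using h.apply_eq_zero n y

theorem HasFPowerSeriesAt.of_apply_diag_eq (hp : HasFPowerSeriesAt f p x) (hq : 0 < q.radius)
    (h : ∀ n y, (q n fun _ => y) = p n fun _ => y) : HasFPowerSeriesAt f q x := by
  obtain ⟨r, hr⟩ := hp
  refine ⟨min r q.radius, min_le_right _ _, lt_min hr.r_pos hq, fun {y} hy => ?_⟩
  simpa only [h] using hr.hasSum (Metric.eball_subset_eball (min_le_left _ _) hy)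

theorem ContinuousMultilinearMap.apply_diag_eq_zero_of_eventually {k : ℕ}
    {g : ContinuousMultilinearMap 𝕜 (fun _ : Fin k => E) F}
    (h : ∀ᶠ z in 𝓝 0, (g fun _ => z) = 0) (z : E) : (g fun _ => z) = 0 := by
  have hsmul : Tendsto (fun c : 𝕜 => c • z) (𝓝[≠] 0) (𝓝 0) :=
    ((continuous_id.smul continuous_const).tendsto' 0 0 (zero_smul 𝕜 z)).mono_left
      nhdsWithin_le_nhds
  obtain ⟨c, hcz, hc⟩ := ((hsmul.eventually h).and self_mem_nhdsWithin).exists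
  have : (g fun _ => c • z) = c ^ k • g fun _ => z := by
    simpa using g.map_smul_univ (fun _ => c) fun _ => z
  rw [this, smul_eq_zero] at hcz
  exact hcz.resolve_left (pow_ne_zero _ hc)

end Analytic

section Iterate

variable {𝕜 E : Type*} [NontriviallyNormedField 𝕜] [NormedAddCommGroup E] [NormedSpace 𝕜 E]
  {F : E → E} {V : Set E} {p : FormalMultilinearSeries 𝕜 E E} {x : E} {k : ℕ}

theorem HasFPowerSeriesAt.exists_iterate_isIdModDegree (hp : HasFPowerSeriesAt F p x)
    (hFx : F x = x) (hpk : p.IsIdModDegree k) (hk : 2 ≤ k) (n : ℕ) :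
    ∃ q : FormalMultilinearSeries 𝕜 E E,
      HasFPowerSeriesAt F^[n] q x ∧ q.IsIdModDegree k ∧ q k = n • p k := by
  induction n with
  | zero =>
    refine ⟨(ContinuousLinearMap.id 𝕜 E).fpowerSeries x,
      (ContinuousLinearMap.id 𝕜 E).hasFPowerSeriesAt x, ⟨rfl, fun j hj _ => ?_⟩, ?_⟩
    · obtain ⟨j, rfl⟩ := Nat.exists_eq_add_of_le' hj
      exact ContinuousLinearMap.fpowerSeries_apply_add_two _ _ _
    · obtain ⟨j, rfl⟩ := Nat.exists_eq_add_of_le' hk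
      rw [zero_smul, ContinuousLinearMap.fpowerSeries_apply_add_two]
  | succ n ih =>
    obtain ⟨q, hq, hqk, hqk_eq⟩ := ih
    refine ⟨p.comp q, ?_, hpk.comp hqk, ?_⟩
    · rw [Function.iterate_succ']
      exact (Function.iterate_fixed hFx n ▸ hp).comp hq
    · rw [comp_eq_add_of_isIdModDegree hpk hqk hk le_rfl, hqk_eq, succ_nsmul']

theorem AnalyticOnNhd.iterate (hFa : AnalyticOnNhd 𝕜 F V) (hFV : MapsTo F V V) (n : ℕ) :
    AnalyticOnNhd 𝕜 F^[n] V := by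
  induction n with
  | zero => exact analyticOnNhd_id
  | succ n ih => exact Function.iterate_succ' F n ▸ hFa.comp ih (hFV.iterate n)

end Iterate

section Cauchy

variable {E F : Type*} [NormedAddCommGroup E] [NormedSpace ℂ E] [NormedAddCommGroup F]
  [NormedSpace ℂ F]

theorem HasFPowerSeriesAt.norm_apply_diag_le [CompleteSpace F] {f : E → F}
    {p : FormalMultilinearSeries ℂ E F} {x z : E} {M : ℝ} (hp : HasFPowerSeriesAt f p x)
    (hf : DifferentiableOn ℂ f (Metric.closedBall x ‖z‖))
    (hM : ∀ y ∈ Metric.closedBall x ‖z‖, ‖f y‖ ≤ M) (k : ℕ) :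
    ‖p k fun _ => z‖ ≤ M := by
  set L : ℂ →L[ℂ] E := (ContinuousLinearMap.id ℂ ℂ).smulRight z
  set φ : ℂ → F := fun t => f (t • z + x)
  have hL : ∀ t ∈ Metric.closedBall (0 : ℂ) 1, t • z + x ∈ Metric.closedBall x ‖z‖ := by
    intro t ht
    rw [mem_closedBall_zero_iff] at ht
    rw [Metric.mem_closedBall, dist_eq_norm, add_sub_cancel_right, norm_smul]
    exact mul_le_of_le_one_left (norm_nonneg _) ht
  have hφ : HasFPowerSeriesAt φ (p.compContinuousLinearMap L) 0 := by
    have hx : HasFPowerSeriesAt (fun w => f (w + x)) p (L 0) := by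
      simpa using hp.comp_sub (-x)
    exact hx.compContinuousLinearMap
  have hφ_diff : DifferentiableOn ℂ φ (Metric.closedBall 0 (1 : NNReal)) :=
    hf.comp ((differentiable_id.smul_const z).add_const x).differentiableOn
      fun t ht => hL t (by simpa using ht)
  have hcauchy : HasFPowerSeriesAt φ (cauchyPowerSeries φ 0 1) 0 := by
    simpa using (hφ_diff.hasFPowerSeriesOnBall one_pos).hasFPowerSeriesAt
  have hint : ∫ θ in (0 : ℝ)..2 * Real.pi, ‖φ (circleMap 0 1 θ)‖ ≤ 2 * Real.pi * M := by
    refine (le_abs_self _).trans ?_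
    have := intervalIntegral.norm_integral_le_of_norm_le_const (a := 0) (b := 2 * Real.pi)
      (f := fun θ => ‖φ (circleMap 0 1 θ)‖) (C := M) fun θ _ => by
        simpa using hM _ (hL _ (by simp))
    simpa [abs_of_pos Real.pi_pos, mul_comm] using this
  calc ‖p k fun _ => z‖ = ‖cauchyPowerSeries φ 0 1 k fun _ => 1‖ := by
        rw [← hφ.eq_formalMultilinearSeries hcauchy, compContinuousLinearMap_apply]
        simp only [L, Function.comp_def, ContinuousLinearMap.smulRight_apply,
          ContinuousLinearMap.id_apply, one_smul]
    _ ≤ ‖cauchyPowerSeries φ 0 1 k‖ :=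
        ((cauchyPowerSeries φ 0 1 k).le_opNorm _).trans_eq (by simp)
    _ ≤ ((2 * Real.pi)⁻¹ * ∫ θ in (0 : ℝ)..2 * Real.pi, ‖φ (circleMap 0 1 θ)‖) * |1|⁻¹ ^ k :=
        norm_cauchyPowerSeries_le φ 0 1 k
    _ ≤ M := by
        rw [abs_one, inv_one, one_pow, mul_one]
        calc _ ≤ (2 * Real.pi)⁻¹ * (2 * Real.pi * M) := by gcongr
          _ = M := inv_mul_cancel_left₀ Real.two_pi_pos.ne' M

end Cauchy

section Cartan

variable {E : Type*} [NormedAddCommGroup E] [NormedSpace ℂ E] [CompleteSpace E] {V : Set E}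
  {F : E → E} {x : E}

theorem AnalyticOnNhd.apply_diag_eq_zero_of_mapsTo (hVo : IsOpen V) (hVb : Bornology.IsBounded V)
    (hFa : AnalyticOnNhd ℂ F V) (hFV : MapsTo F V V) (hx : x ∈ V) (hFx : F x = x)
    {p : FormalMultilinearSeries ℂ E E} (hp : HasFPowerSeriesAt F p x) {k : ℕ}
    (hpk : p.IsIdModDegree k) (hk : 2 ≤ k) (y : E) : (p k fun _ => y) = 0 := by
  obtain ⟨M, hM⟩ := isBounded_iff_forall_norm_le.1 hVb
  obtain ⟨δ, hδ, hδV⟩ := Metric.nhds_basis_closedBall.mem_iff.1 (hVo.mem_nhds hx)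
  refine (p k).apply_diag_eq_zero_of_eventually ?_ y
  filter_upwards [Metric.closedBall_mem_nhds (0 : E) hδ] with z hz
  have hball : Metric.closedBall x ‖z‖ ⊆ V :=
    (Metric.closedBall_subset_closedBall (mem_closedBall_zero_iff.1 hz)).trans hδV
  have hbound : ∀ n : ℕ, n • ‖p k fun _ => z‖ ≤ M := by
    intro n
    obtain ⟨q, hq, -, hqk⟩ := hp.exists_iterate_isIdModDegree hFx hpk hk n
    have := hq.norm_apply_diag_le ((hFa.iterate hFV n).differentiableOn.mono hball)
      (fun y hy => hM _ (hFV.iterate n (hball hy))) k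
    rwa [hqk, _root_.smul_apply, RCLike.norm_nsmul ℂ] at this
  by_contra hne
  obtain ⟨n, hn⟩ := exists_lt_nsmul (norm_pos_iff.2 hne) M
  exact (hbound n).not_gt hn

theorem AnalyticOnNhd.exists_hasFPowerSeriesAt_isIdModDegree (hVo : IsOpen V)
    (hVb : Bornology.IsBounded V) (hFa : AnalyticOnNhd ℂ F V) (hFV : MapsTo F V V) (hx : x ∈ V)
    (hFx : F x = x) {p : FormalMultilinearSeries ℂ E E} (hp : HasFPowerSeriesAt F p x)
    (hp2 : p.IsIdModDegree 2) {k : ℕ} (hk : 2 ≤ k) :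
    ∃ q : FormalMultilinearSeries ℂ E E, HasFPowerSeriesAt F q x ∧ q.IsIdModDegree k := by
  induction k, hk using Nat.le_induction with
  | base => exact ⟨p, hp, hp2⟩
  | succ k hk ih =>
    obtain ⟨q, hq, hqk⟩ := ih
    have hqk_zero := hFa.apply_diag_eq_zero_of_mapsTo hVo hVb hFV hx hFx hq hqk hk
    -- `q k` need not be symmetric, but only its values on the diagonal are seen by `F`.
    let q' : FormalMultilinearSeries ℂ E E := Function.update q k 0
    have hq'k : q' k = 0 := Function.update_self _ _ _
    have hq' : ∀ n, n ≠ k → q' n = q n := fun n hn => Function.update_of_ne hn _ _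
    refine ⟨q', hq.of_apply_diag_eq ?_ fun n y => ?_, ⟨?_, fun j hj hjk => ?_⟩⟩
    · refine hq.radius_pos.trans_le (radius_le_of_le fun n => ?_)
      rcases eq_or_ne n k with rfl | hn
      · simp [hq'k]
      · rw [hq' n hn]
    · rcases eq_or_ne n k with rfl | hn
      · simp [hq'k, hqk_zero]
      · rw [hq' n hn]
    · rw [hq' 1 (by omega), hqk.one_eq]
    · rcases eq_or_ne j k with rfl | hn
      · exact hq'k
      · rw [hq' j hn, hqk.eq_zero j hj (by omega)]

theorem AnalyticOnNhd.eventuallyEq_id_of_mapsTo (hVo : IsOpen V) (hVb : Bornology.IsBounded V)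
    (hFa : AnalyticOnNhd ℂ F V) (hFV : MapsTo F V V) (hx : x ∈ V) (hFx : F x = x)
    (hFd : fderiv ℂ F x = ContinuousLinearMap.id ℂ E) : F =ᶠ[𝓝 x] id := by
  obtain ⟨p, hp⟩ := hFa x hx
  have hp2 : p.IsIdModDegree 2 :=
    ⟨(continuousMultilinearCurryFin1 ℂ E E).eq_symm_apply.2 (hp.fderiv_eq.symm.trans hFd),
      fun j hj hj2 => absurd hj2 (not_lt.2 hj)⟩
  have hdiag : ∀ n y, ((ContinuousLinearMap.id ℂ E).fpowerSeries x n fun _ => y) =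
      p n fun _ => y := by
    rintro (_ | _ | n) y
    · simp [hp.coeff_zero, hFx]
    · simp [hp2.one_eq]
    · obtain ⟨q, hq, hqk⟩ := hFa.exists_hasFPowerSeriesAt_isIdModDegree hVo hVb hFV hx hFx hp
        hp2 (k := n + 3) (by omega)
      rw [hp.apply_diag_eq hq, hqk.eq_zero (n + 2) (by omega) (by omega),
        ContinuousLinearMap.fpowerSeries_apply_add_two]
  have hid := hp.of_apply_diag_eq (by simp) hdiag
  have := hid.sub ((ContinuousLinearMap.id ℂ E).hasFPowerSeriesAt x)
  rw [sub_self] at this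
  filter_upwards [this.eventually_eq_zero] with y hy using sub_eq_zero.1 hy

theorem AnalyticOnNhd.eqOn_id_of_mapsTo (hVo : IsOpen V) (hVb : Bornology.IsBounded V)
    (hVc : IsPreconnected V) (hFa : AnalyticOnNhd ℂ F V) (hFV : MapsTo F V V) (hx : x ∈ V)
    (hFx : F x = x) (hFd : fderiv ℂ F x = ContinuousLinearMap.id ℂ E) : EqOn F id V :=
  hFa.eqOn_of_preconnected_of_eventuallyEq analyticOnNhd_id hVc hx
    (hFa.eventuallyEq_id_of_mapsTo hVo hVb hFV hx hFx hFd)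

end Cartan

theorem cartan_uniqueness_general {E : Type*} [NormedAddCommGroup E] [NormedSpace ℂ E]
    [FiniteDimensional ℂ E] (V W : Set E)
    (hVo : IsOpen V) (hVb : Bornology.IsBounded V) (hVc : IsConnected V) (h0V : (0 : E) ∈ V)
    (Φ Ψ : E → E)
    (hΦa : AnalyticOnNhd ℂ Φ V) (hΦbij : Set.BijOn Φ V W)
    (hΦinv : ∃ g : E → E, AnalyticOnNhd ℂ g W ∧ (∀ v ∈ V, g (Φ v) = v) ∧
      ∀ w ∈ W, Φ (g w) = w)
    (hΨa : AnalyticOnNhd ℂ Ψ V) (hΨW : Set.MapsTo Ψ V W)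
    (h0 : Ψ 0 = Φ 0) (hD : fderiv ℂ Ψ 0 = fderiv ℂ Φ 0) :
    ∀ v ∈ V, Ψ v = Φ v := by
  obtain ⟨g, hga, hgΦ, hΦg⟩ := hΦinv
  have hgW : MapsTo g W V := fun w hw => by
    obtain ⟨v, hv, rfl⟩ := hΦbij.surjOn hw
    rwa [hgΦ v hv]
  have hg_diff : DifferentiableAt ℂ g (Φ 0) := (hga _ (hΦbij.mapsTo h0V)).differentiableAt
  have hgΦ_id : g ∘ Φ =ᶠ[𝓝 0] id := eventually_of_mem (hVo.mem_nhds h0V) hgΦ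
  have hFd : fderiv ℂ (g ∘ Ψ) 0 = ContinuousLinearMap.id ℂ E := by
    rw [fderiv_comp 0 (h0 ▸ hg_diff) (hΨa 0 h0V).differentiableAt, hD, h0,
      ← fderiv_comp 0 hg_diff (hΦa 0 h0V).differentiableAt, hgΦ_id.fderiv_eq, fderiv_id]
  have hF : EqOn (g ∘ Ψ) id V :=
    (hga.comp hΨa hΨW).eqOn_id_of_mapsTo hVo hVb hVc.isPreconnected (hgW.comp hΨW) h0V
      (by simp [h0, hgΦ 0 h0V]) hFd
  intro v hv
  rw [← hΦg _ (hΨW hv)]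
  exact congrArg Φ (hF hv)

/-- Let `V, W` be bounded connected open subsets of a finite-dimensional complex
vector space `E`, both containing `0`. If `Φ : V → W` is a biholomorphism and
`Ψ : V → W` is holomorphic with `Ψ 0 = Φ 0` and `D₀Ψ = D₀Φ`, then `Ψ = Φ` on `V`. -/
theorem cartan_uniqueness {E : Type*} [NormedAddCommGroup E] [NormedSpace ℂ E]
    [FiniteDimensional ℂ E] (V W : Set E)
    (hVo : IsOpen V) (hVb : Bornology.IsBounded V) (hVc : IsConnected V) (h0V : (0 : E) ∈ V)
    (hWo : IsOpen W) (hWb : Bornology.IsBounded W) (hWc : IsConnected W) (h0W : (0 : E) ∈ W)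
    (Φ Ψ : E → E)
    (hΦa : AnalyticOnNhd ℂ Φ V) (hΦbij : Set.BijOn Φ V W)
    (hΦinv : ∃ g : E → E, AnalyticOnNhd ℂ g W ∧ (∀ v ∈ V, g (Φ v) = v) ∧
      ∀ w ∈ W, Φ (g w) = w)
    (hΨa : AnalyticOnNhd ℂ Ψ V) (hΨW : Set.MapsTo Ψ V W)
    (h0 : Ψ 0 = Φ 0) (hD : fderiv ℂ Ψ 0 = fderiv ℂ Φ 0) :
    ∀ v ∈ V, Ψ v = Φ v :=
  cartan_uniqueness_general V W hVo hVb hVc h0V Φ Ψ hΦa hΦbij hΦinv hΨa hΨW h0 hD
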